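/- With notation as in the node-centered equivalence, if the charge density on the fine grid is ρ̃(x̃_j) = (Q/(N·h_f))·∑_{p=1}^N W_f(x̃_j - x_p) and the coarse-grid density is obtained by restriction ϱ(x_k) = (h_f/h_c)·∑_j ρ̃(x̃_j)·W_c(x_k - x̃_j), then ϱ(x_k) = (Q/(N·h_c))·∑_{p=1}^N W_c(x_k - x_p). -/

import Mathlib

/-!
Exchanging the sum over particles with the sum over fine nodes reduces the claim to a single
particle at `y`: `∑ⱼ W_f(x̃ⱼ - y) W_c(x_k - x̃ⱼ) = W_c(x_k - y)`. The left side is the linear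
interpolation of `W_c(x_k - ·)` at `y` from the two fine nodes around `y`, and it is exact because
the kinks of `W_c(x_k - ·)`, at `x_k` and `x_k ± h_c = x_k ± m h_f`, are themselves fine nodes.
-/

noncomputable def hat (h ζ : ℝ) : ℝ := max 0 (1 - |ζ| / h)

lemma hat_mul_mul {h : ℝ} (hh : 0 < h) (c a : ℝ) : hat (c * h) (a * h) = hat c a := by
  rw [hat, hat, abs_mul, abs_of_pos hh, mul_div_mul_right _ _ hh.ne']

lemma hat_one_eq_zero {ζ : ℝ} (hζ : 1 ≤ |ζ|) : hat 1 ζ = 0 := by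
  simpa [hat] using hζ

lemma hat_one_of_abs_le {ζ : ℝ} (hζ : |ζ| ≤ 1) : hat 1 ζ = 1 - |ζ| := by
  simpa [hat] using hζ

lemma hasSum_hat_one_mul (u : ℝ) (g : ℝ → ℝ) :
    HasSum (fun j : ℤ => hat 1 (j - u) * g j)
      ((1 - Int.fract u) * g ⌊u⌋ + Int.fract u * g (⌊u⌋ + 1)) := by
  have hfract₀ := Int.fract_nonneg u
  have hfract₁ := Int.fract_lt_one u
  have hlow : (⌊u⌋ : ℝ) - u = -Int.fract u := by rw [Int.fract]; ring
  have hhigh : ((⌊u⌋ + 1 : ℤ) : ℝ) - u = 1 - Int.fract u := by rw [Int.fract]; push_cast; ring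
  have hvanish : ∀ j ∉ ({⌊u⌋, ⌊u⌋ + 1} : Finset ℤ), hat 1 (j - u) * g j = 0 := by
    intro j hj
    simp only [Finset.mem_insert, Finset.mem_singleton, not_or] at hj
    refine mul_eq_zero_of_left (hat_one_eq_zero (le_abs.2 ?_)) _
    rcases lt_or_gt_of_ne hj.1 with hlt | hgt
    · have : (j : ℝ) ≤ ⌊u⌋ - 1 := by exact_mod_cast (by omega : j ≤ ⌊u⌋ - 1)
      right; linarith
    · have : (⌊u⌋ : ℝ) + 2 ≤ j := by exact_mod_cast (by omega : ⌊u⌋ + 2 ≤ j)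
      left; linarith
  have hsum : HasSum _ _ := hasSum_sum_of_ne_finset_zero hvanish
  have habs_low : |-Int.fract u| = Int.fract u := by rw [abs_neg, Int.abs_fract]
  have habs_high : |1 - Int.fract u| = 1 - Int.fract u := abs_of_pos (by linarith)
  rw [Finset.sum_pair (by omega), hlow, hhigh, hat_one_of_abs_le, hat_one_of_abs_le, habs_low,
    habs_high, sub_sub_cancel, Int.cast_add, Int.cast_one] at hsum
  · exact hsum
  all_goals linarith

lemma max_zero_convex_comb {a b t : ℝ} (ht₀ : 0 ≤ t) (ht₁ : t ≤ 1)
    (hab : 0 ≤ a ∧ 0 ≤ b ∨ a ≤ 0 ∧ b ≤ 0) :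
    max 0 ((1 - t) * a + t * b) = (1 - t) * max 0 a + t * max 0 b := by
  rcases hab with ⟨ha, hb⟩ | ⟨ha, hb⟩
  · rw [max_eq_right ha, max_eq_right hb, max_eq_right (by nlinarith)]
  · rw [max_eq_left ha, max_eq_left hb, max_eq_left (by nlinarith)]
    ring

lemma abs_convex_comb {a b t : ℝ} (ht₀ : 0 ≤ t) (ht₁ : t ≤ 1)
    (hab : 0 ≤ a ∧ 0 ≤ b ∨ a ≤ 0 ∧ b ≤ 0) :
    |(1 - t) * a + t * b| = (1 - t) * |a| + t * |b| := by
  rcases hab with ⟨ha, hb⟩ | ⟨ha, hb⟩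
  · rw [abs_of_nonneg ha, abs_of_nonneg hb, abs_of_nonneg (by nlinarith)]
  · rw [abs_of_nonpos ha, abs_of_nonpos hb, abs_of_nonpos (by nlinarith)]
    ring

/-- The kinks of `hat m` sit at the integers `-m, 0, m`, so two adjacent integers never lie on
opposite sides of one. -/
lemma hat_intCast_sub (m : ℕ) (s : ℤ) {t : ℝ} (ht₀ : 0 ≤ t) (ht₁ : t ≤ 1) :
    hat m (s - t) = (1 - t) * hat m s + t * hat m (s - 1) := by
  have hsign : (0 : ℝ) ≤ s ∧ 0 ≤ (s : ℝ) - 1 ∨ (s : ℝ) ≤ 0 ∧ (s : ℝ) - 1 ≤ 0 := by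
    have : 0 ≤ s ∧ 0 ≤ s - 1 ∨ s ≤ 0 ∧ s - 1 ≤ 0 := by omega
    exact_mod_cast this
  have hcomb : 1 - |(s : ℝ) - t| / m =
      (1 - t) * (1 - |(s : ℝ)| / m) + t * (1 - |(s : ℝ) - 1| / m) := by
    rw [show (s : ℝ) - t = (1 - t) * s + t * (s - 1) by ring, abs_convex_comb ht₀ ht₁ hsign]
    ring
  rw [hat, hcomb, max_zero_convex_comb ht₀ ht₁, hat, hat]
  rcases Nat.eq_zero_or_pos m with rfl | hm
  · simp -- `hat 0 ≡ 1`, as `x / 0 = 0`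
  · have hm' : (0 : ℝ) < m := by exact_mod_cast hm
    simp only [sub_nonneg, sub_nonpos, div_le_one hm', one_le_div hm']
    have : (|s| ≤ m ∧ |s - 1| ≤ m) ∨ (m ≤ |s| ∧ m ≤ |s - 1|) := by
      rcases abs_cases s with h | h <;> rcases abs_cases (s - 1) with h' | h' <;> omega
    exact_mod_cast this

lemma hasSum_hat_mul_hat {h : ℝ} (hh : 0 < h) (m : ℕ) (k : ℤ) (y : ℝ) :
    HasSum (fun j : ℤ => hat h (j * h - y) * hat (m * h) (k * (m * h) - j * h))
      (hat (m * h) (k * (m * h) - y)) := by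
  set u := y / h
  have hy : y = u * h := (div_mul_cancel₀ y hh.ne').symm
  have hfine : ∀ j : ℤ, hat h (j * h - y) = hat 1 (j - u) := fun j => by
    rw [hy, ← sub_mul, ← hat_mul_mul hh 1, one_mul]
  have hcoarse : ∀ v : ℝ, hat (m * h) (k * (m * h) - v * h) = hat m (k * m - v) := fun v => by
    rw [show (k : ℝ) * (m * h) - v * h = (k * m - v) * h by ring, hat_mul_mul hh]
  simp only [hfine, hcoarse]
  rw [hy, hcoarse]
  convert hasSum_hat_one_mul u (fun v => hat m (k * m - v)) using 1
  have hinterp := hat_intCast_sub m (k * m - ⌊u⌋) (Int.fract_nonneg u) (Int.fract_lt_one u).le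
  rw [Int.cast_sub, Int.cast_mul, Int.cast_natCast] at hinterp
  rw [sub_add_eq_sub_sub, ← hinterp, ← Int.self_sub_floor, sub_sub_sub_cancel_right]

theorem two_step_deposition_density_general (hf : ℝ) (hhf : 0 < hf)
    (m : ℕ) (hc : ℝ) (hhc : hc = (m : ℝ) * hf)
    (Wf Wc : ℝ → ℝ)
    (hWf : ∀ ζ, Wf ζ = max 0 (1 - |ζ| / hf))
    (hWc : ∀ ζ, Wc ζ = max 0 (1 - |ζ| / hc))
    (N : ℕ) (Q : ℝ) (x : Fin N → ℝ)
    (ρtil : ℤ → ℝ)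
    (hρtil : ∀ j : ℤ, ρtil j = Q / (N * hf) * ∑ p, Wf ((j : ℝ) * hf - x p))
    (k : ℤ) :
    (hf / hc) * ∑' j : ℤ, ρtil j * Wc ((k : ℝ) * hc - (j : ℝ) * hf)
      = Q / (N * hc) * ∑ p, Wc ((k : ℝ) * hc - x p) := by
  obtain rfl : Wf = hat hf := funext hWf
  obtain rfl : Wc = hat hc := funext hWc
  subst hhc
  have hsum : HasSum (fun j : ℤ => ρtil j * hat (m * hf) (k * (m * hf) - j * hf))
      (Q / (N * hf) * ∑ p, hat (m * hf) (k * (m * hf) - x p)) := by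
    simp only [hρtil, mul_assoc, Finset.sum_mul]
    exact (hasSum_sum fun p _ => hasSum_hat_mul_hat hhf m k (x p)).mul_left _
  rw [hsum.tsum_eq, ← mul_assoc]
  congr 1
  field_simp

/-- Two-step charge deposition equals direct deposition on node-centered grids: if the fine-grid
density is `ρ̃(x̃_j) = (Q/(N·h_f))·∑_p W_f(x̃_j - x_p)` and the coarse-grid density is obtained by
restriction `ϱ(x_k) = (h_f/h_c)·∑_j ρ̃(x̃_j)·W_c(x_k - x̃_j)`, then
`ϱ(x_k) = (Q/(N·h_c))·∑_p W_c(x_k - x_p)`. -/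
theorem two_step_deposition_density (hf : ℝ) (hhf : 0 < hf)
    (m : ℕ) (hm : 0 < m) (hc : ℝ) (hhc : hc = (m : ℝ) * hf)
    (Wf Wc : ℝ → ℝ)
    (hWf : ∀ ζ, Wf ζ = max 0 (1 - |ζ| / hf))
    (hWc : ∀ ζ, Wc ζ = max 0 (1 - |ζ| / hc))
    (N : ℕ) (hN : 0 < N) (Q : ℝ) (x : Fin N → ℝ)
    (ρtil : ℤ → ℝ)
    (hρtil : ∀ j : ℤ, ρtil j = Q / (N * hf) * ∑ p, Wf ((j : ℝ) * hf - x p))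
    (k : ℤ) :
    (hf / hc) * ∑' j : ℤ, ρtil j * Wc ((k : ℝ) * hc - (j : ℝ) * hf)
      = Q / (N * hc) * ∑ p, Wc ((k : ℝ) * hc - x p) :=
  two_step_deposition_density_general hf hhf m hc hhc Wf Wc hWf hWc N Q x ρtil hρtil k
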